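/- arXiv:2102.03967 — 4 statements merged into one kernel-verified Lean document; each statement's English description precedes it below -/
import Mathlib

section
/- Let C be a chain complex and D ⊆ C a graded abelian subgroup. Then the inclusion Inf(D,C) → Sup(D,C) induces an isomorphism on homology in every degree. -/
/-- Oriented `n`-simplices on a vertex set `V`: finsets of cardinality `n+1`. -/
abbrev Simp (V : Type) (n : ℕ) : Type := {σ : Finset V // σ.card = n + 1}

/-- The group of `n`-chains with coefficients in `G` on the full simplex on `V`. -/
abbrev Ch (V : Type) (G : Type) [AddCommGroup G] (n : ℕ) : Type := Simp V n →₀ G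

/-- Boundary of a single `(n+1)`-simplex with coefficient `g`. -/
noncomputable def bdryFun (V : Type) [LinearOrder V] (G : Type) [AddCommGroup G]
    (n : ℕ) (σ : Simp V (n + 1)) (g : G) : Ch V G n :=
  ∑ v ∈ σ.1.attach, Finsupp.single
    ⟨σ.1.erase v.1, by rw [Finset.card_erase_of_mem v.2, σ.2]; omega⟩
    (((-1 : ℤ) ^ ((σ.1.filter fun w => w < v.1).card)) • g)

/-- The simplicial boundary homomorphism `C_{n+1} → C_n`. -/
noncomputable def bdry (V : Type) [LinearOrder V] (G : Type) [AddCommGroup G]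
    (n : ℕ) : Ch V G (n + 1) →+ Ch V G n :=
  Finsupp.liftAddHom fun σ =>
    { toFun := bdryFun V G n σ
      map_zero' := by simp [bdryFun]
      map_add' := fun a b => by
        simp [bdryFun, smul_add, Finsupp.single_add, Finset.sum_add_distrib] }

/-- The subgroup `G(K)_n ⊆ C_n` of chains supported on the `n`-hyperedges of `K`. -/
def chainsOn (V : Type) [LinearOrder V] (G : Type) [AddCommGroup G]
    (K : Set (Finset V)) (n : ℕ) : AddSubgroup (Ch V G n) where
  carrier := {c | ∀ σ ∈ c.support, (σ : Simp V n).1 ∈ K}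
  zero_mem' := by simp
  add_mem' := by
    intro a b ha hb σ hσ
    rcases Finset.mem_union.mp (Finsupp.support_add hσ) with h | h
    exacts [ha σ h, hb σ h]
  neg_mem' := by
    intro a ha σ hσ
    exact ha σ (by simpa using hσ)

section Generic

variable {C : ℕ → Type} [∀ n, AddCommGroup (C n)]

/-- The infimum chain complex of a graded subgroup `D` inside `(C, d)`. -/
def InfC (d : ∀ n, C (n + 1) →+ C n) (D : ∀ n, AddSubgroup (C n)) :
    ∀ n, AddSubgroup (C n)
  | 0 => D 0
  | (n + 1) => D (n + 1) ⊓ (D n).comap (d n)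

/-- The supremum chain complex of a graded subgroup `D` inside `(C, d)`. -/
def SupC (d : ∀ n, C (n + 1) →+ C n) (D : ∀ n, AddSubgroup (C n)) (n : ℕ) :
    AddSubgroup (C n) :=
  D n ⊔ (D (n + 1)).map (d n)

/-- Relative cycles of the pair of graded subgroups `(K, L)`. -/
def relZ (d : ∀ n, C (n + 1) →+ C n) (K L : ∀ n, AddSubgroup (C n)) :
    ∀ n, AddSubgroup (C n)
  | 0 => K 0
  | (n + 1) => K (n + 1) ⊓ (L n).comap (d n)

/-- Relative boundaries of the pair of graded subgroups `(K, L)`. -/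
def relB (d : ∀ n, C (n + 1) →+ C n) (K L : ∀ n, AddSubgroup (C n)) (n : ℕ) :
    AddSubgroup (C n) :=
  ((K (n + 1)).map (d n) ⊔ L n) ⊓ relZ d K L n

/-- Relative homology of the pair `(K, L)`, i.e. the homology of the quotient chain
complex `K/L`.  (Taking `L = ⊥` gives the absolute homology of `K`.) -/
abbrev relH (d : ∀ n, C (n + 1) →+ C n) (K L : ∀ n, AddSubgroup (C n)) (n : ℕ) : Type _ :=
  relZ d K L n ⧸ (relB d K L n).addSubgroupOf (relZ d K L n)

theorem relZ_mono (d : ∀ n, C (n + 1) →+ C n) {K L K' L' : ∀ n, AddSubgroup (C n)}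
    (hK : ∀ n, K n ≤ K' n) (hL : ∀ n, L n ≤ L' n) :
    ∀ n, relZ d K L n ≤ relZ d K' L' n
  | 0 => hK 0
  | (n + 1) => inf_le_inf (hK (n + 1)) (AddSubgroup.comap_mono (hL n))

theorem relB_mono (d : ∀ n, C (n + 1) →+ C n) {K L K' L' : ∀ n, AddSubgroup (C n)}
    (hK : ∀ n, K n ≤ K' n) (hL : ∀ n, L n ≤ L' n) (n : ℕ) :
    relB d K L n ≤ relB d K' L' n :=
  inf_le_inf (sup_le_sup (AddSubgroup.map_mono (hK (n + 1))) (hL n))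
    (relZ_mono d hK hL n)

/-- The map on relative homology induced by an inclusion of pairs. -/
noncomputable def inducedRelMap (d : ∀ n, C (n + 1) →+ C n)
    {K L K' L' : ∀ n, AddSubgroup (C n)}
    (hK : ∀ n, K n ≤ K' n) (hL : ∀ n, L n ≤ L' n) (n : ℕ) :
    relH d K L n →+ relH d K' L' n :=
  QuotientAddGroup.map _ _ (AddSubgroup.inclusion (relZ_mono d hK hL n)) (by
    intro x hx
    simp only [AddSubgroup.mem_comap, AddSubgroup.mem_addSubgroupOf,
      AddSubgroup.coe_inclusion] at hx ⊢
    exact relB_mono d hK hL n hx)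

theorem InfC_le_SupC (d : ∀ n, C (n + 1) →+ C n) (D : ∀ n, AddSubgroup (C n)) :
    ∀ n, InfC d D n ≤ SupC d D n := by
  intro n
  cases n with
  | zero => exact le_sup_left
  | succ n => exact le_trans inf_le_left le_sup_left

theorem InfC_mono (d : ∀ n, C (n + 1) →+ C n) {D D' : ∀ n, AddSubgroup (C n)}
    (h : ∀ n, D n ≤ D' n) : ∀ n, InfC d D n ≤ InfC d D' n
  | 0 => h 0
  | (n + 1) => inf_le_inf (h (n + 1)) (AddSubgroup.comap_mono (h n))

end Generic

theorem chainsOn_mono (V : Type) [LinearOrder V] (G : Type) [AddCommGroup G]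
    {K K' : Set (Finset V)} (h : K ⊆ K') (n : ℕ) :
    chainsOn V G K n ≤ chainsOn V G K' n := by
  intro c hc σ hσ
  exact h (hc σ hσ)

/-!
Every cycle of `Sup(D,C)` is homologous, by a boundary `∂b` with `b ∈ D`, to a cycle lying in
`D`, and the cycles of `Inf(D,C)` are exactly the cycles lying in `D`; this gives surjectivity.
Since `∂∂ = 0`, the boundaries of `Sup(D,C)` are the boundaries `∂a` with `a ∈ D`, and such
an `a` lies in `Inf(D,C)` as soon as `∂a ∈ D`; this gives injectivity.
-/

namespace RelHomology

variable {C : ℕ → Type} [∀ n, AddCommGroup (C n)] (d : ∀ n, C (n + 1) →+ C n)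

theorem relZ_le (K L : ∀ n, AddSubgroup (C n)) : ∀ n, relZ d K L n ≤ K n
  | 0 => le_rfl
  | (_ + 1) => inf_le_left

theorem relZ_inf_le (K K' L : ∀ n, AddSubgroup (C n)) :
    ∀ n, relZ d K L n ⊓ K' n ≤ relZ d K' L n
  | 0 => inf_le_right
  | (_ + 1) => fun _ ⟨⟨_, hxL⟩, hxK'⟩ => ⟨hxK', hxL⟩

theorem apply_mem_relZ_bot (hdd : ∀ n x, d n (d (n + 1) x) = 0) (K : ∀ n, AddSubgroup (C n))
    {n : ℕ} {b : C (n + 1)} (hb : d n b ∈ K n) : d n b ∈ relZ d K (fun _ => ⊥) n := by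
  cases n with
  | zero => exact hb
  | succ n => exact ⟨hb, by simp [hdd]⟩

variable {d} {K L K' L' : ∀ n, AddSubgroup (C n)} {hK : ∀ n, K n ≤ K' n}
  {hL : ∀ n, L n ≤ L' n} {n : ℕ}

theorem inducedRelMap_injective
    (h : ∀ x ∈ relZ d K L n, x ∈ relB d K' L' n → x ∈ relB d K L n) :
    Function.Injective (inducedRelMap d hK hL n) := by
  rw [injective_iff_map_eq_zero]
  intro y hy
  obtain ⟨⟨x, hxZ⟩, rfl⟩ := QuotientAddGroup.mk_surjective y
  rw [inducedRelMap, QuotientAddGroup.map_mk, QuotientAddGroup.eq_zero_iff] at hy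
  exact (QuotientAddGroup.eq_zero_iff _).2 (h x hxZ hy)

theorem inducedRelMap_surjective
    (h : ∀ z ∈ relZ d K' L' n, ∃ a ∈ relZ d K L n, z - a ∈ relB d K' L' n) :
    Function.Surjective (inducedRelMap d hK hL n) := by
  intro y
  obtain ⟨⟨z, hzZ⟩, rfl⟩ := QuotientAddGroup.mk_surjective y
  obtain ⟨a, haZ, hza⟩ := h z hzZ
  refine ⟨QuotientAddGroup.mk ⟨a, haZ⟩, ?_⟩
  rw [inducedRelMap, QuotientAddGroup.map_mk, QuotientAddGroup.eq]
  simpa [AddSubgroup.mem_addSubgroupOf, neg_add_eq_sub] using hza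

end RelHomology

section InfSup

open RelHomology

variable {C : ℕ → Type} [∀ n, AddCommGroup (C n)] (d : ∀ n, C (n + 1) →+ C n)
  (D : ∀ n, AddSubgroup (C n))

theorem InfC_le : ∀ n, InfC d D n ≤ D n
  | 0 => le_rfl
  | (_ + 1) => inf_le_left

theorem mem_InfC_succ_iff {n : ℕ} {x : C (n + 1)} :
    x ∈ InfC d D (n + 1) ↔ x ∈ D (n + 1) ∧ d n x ∈ D n :=
  Iff.rfl

theorem relZ_InfC_bot : ∀ n, relZ d (InfC d D) (fun _ => ⊥) n = relZ d D (fun _ => ⊥) n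
  | 0 => rfl
  | (n + 1) => le_antisymm (relZ_mono d (InfC_le d D) (fun _ => le_rfl) (n + 1))
      fun _ ⟨hxD, hdx⟩ =>
        ⟨(mem_InfC_succ_iff d D).2 ⟨hxD, AddSubgroup.mem_bot.mp hdx ▸ zero_mem _⟩, hdx⟩

theorem map_SupC_succ (hdd : ∀ n x, d n (d (n + 1) x) = 0) (n : ℕ) :
    (SupC d D (n + 1)).map (d n) = (D (n + 1)).map (d n) := by
  have hdd' : (d n).comp (d (n + 1)) = 0 := AddMonoidHom.ext (hdd n)
  rw [SupC, AddSubgroup.map_sup, AddSubgroup.map_map, hdd', AddSubgroup.map_zero_eq_bot,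
    sup_bot_eq]

theorem map_inf_le_map_InfC (n : ℕ) :
    (D (n + 1)).map (d n) ⊓ D n ≤ (InfC d D (n + 1)).map (d n) := by
  rintro _ ⟨⟨a, ha, rfl⟩, hda⟩
  exact ⟨a, (mem_InfC_succ_iff d D).2 ⟨ha, hda⟩, rfl⟩

theorem relZ_InfC_inf_relB_SupC_le (hdd : ∀ n x, d n (d (n + 1) x) = 0) (n : ℕ) :
    relZ d (InfC d D) (fun _ => ⊥) n ⊓ relB d (SupC d D) (fun _ => ⊥) n ≤
      relB d (InfC d D) (fun _ => ⊥) n := by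
  rintro x ⟨hxZ, hxB, -⟩
  rw [sup_bot_eq, map_SupC_succ d D hdd] at hxB
  have hxD : x ∈ D n := InfC_le d D n (relZ_le d _ _ n hxZ)
  exact ⟨AddSubgroup.mem_sup_left (map_inf_le_map_InfC d D n ⟨hxB, hxD⟩), hxZ⟩

theorem exists_relZ_InfC_sub_mem_relB_SupC (hdd : ∀ n x, d n (d (n + 1) x) = 0) {n : ℕ}
    {z : C n} (hz : z ∈ relZ d (SupC d D) (fun _ => ⊥) n) :
    ∃ a ∈ relZ d (InfC d D) (fun _ => ⊥) n, z - a ∈ relB d (SupC d D) (fun _ => ⊥) n := by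
  obtain ⟨a, ha, _, ⟨b, hb, rfl⟩, rfl⟩ := AddSubgroup.mem_sup.mp (relZ_le d _ _ n hz)
  have hdb : d n b ∈ relZ d (SupC d D) (fun _ => ⊥) n :=
    apply_mem_relZ_bot d hdd _ (AddSubgroup.mem_sup_right ⟨b, hb, rfl⟩)
  have haZ : a ∈ relZ d (SupC d D) (fun _ => ⊥) n := by
    simpa only [add_sub_cancel_right] using sub_mem hz hdb
  refine ⟨a, relZ_InfC_bot d D n ▸ relZ_inf_le d _ _ _ n ⟨haZ, ha⟩, ?_⟩
  rw [add_sub_cancel_left]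
  exact ⟨AddSubgroup.mem_sup_left ⟨b, AddSubgroup.mem_sup_left hb, rfl⟩, hdb⟩

end InfSup

/-- For a chain complex `(C, d)` and a graded abelian subgroup `D ⊆ C`,
the inclusion `Inf(D,C) → Sup(D,C)` induces an isomorphism on homology in every degree. -/
theorem inf_sup_homology_iso
    {C : ℕ → Type} [∀ n, AddCommGroup (C n)]
    (d : ∀ n, C (n + 1) →+ C n) (hdd : ∀ n x, d n (d (n + 1) x) = 0)
    (D : ∀ n, AddSubgroup (C n)) (n : ℕ) :
    Function.Bijective
      (inducedRelMap d (K := InfC d D) (L := fun _ => ⊥)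
        (K' := SupC d D) (L' := fun _ => ⊥)
        (InfC_le_SupC d D) (fun _ => le_rfl) n) :=
  ⟨RelHomology.inducedRelMap_injective fun _ hxZ hxB =>
      relZ_InfC_inf_relB_SupC_le d D hdd n ⟨hxZ, hxB⟩,
    RelHomology.inducedRelMap_surjective fun _ => exists_relZ_InfC_sub_mem_relB_SupC d D hdd⟩
end

section
/- For any hypergraph pair (H, A) (A a sub-hypergraph of H), there is a long exact sequence of relative embedded homology: ⋯ → H_n(A) → H_n(H) → H_n(H, A) → H_{n-1}(A) → ⋯. -/
/-- The map on embedded homology induced by an inclusion of hypergraphs `A ⊆ H`. -/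
noncomputable def embIncl (V : Type) [LinearOrder V] (G : Type) [AddCommGroup G]
    {A H : Set (Finset V)} (hA : A ⊆ H) (n : ℕ) :
    relH (bdry V G) (InfC (bdry V G) fun m => chainsOn V G A m) (fun _ => ⊥) n →+
      relH (bdry V G) (InfC (bdry V G) fun m => chainsOn V G H m) (fun _ => ⊥) n :=
  inducedRelMap (bdry V G) (InfC_mono (bdry V G) fun m => chainsOn_mono V G hA m)
    (fun _ => le_rfl) n

/-- The map from the embedded homology of `H` to the relative embedded homology of the
pair `(H, A)`. -/
noncomputable def embQuot (V : Type) [LinearOrder V] (G : Type) [AddCommGroup G]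
    (H A : Set (Finset V)) (n : ℕ) :
    relH (bdry V G) (InfC (bdry V G) fun m => chainsOn V G H m) (fun _ => ⊥) n →+
      relH (bdry V G) (InfC (bdry V G) fun m => chainsOn V G H m)
        (InfC (bdry V G) fun m => chainsOn V G A m) n :=
  inducedRelMap (bdry V G) (fun _ => le_rfl) (fun _ => bot_le) n

theorem Finset.sum_sum_erase_eq_zero_of_antisymm {α M : Type*} [DecidableEq α] [AddCommMonoid M]
    (s : Finset α) (f : α → α → M) (hf : ∀ a ∈ s, ∀ b ∈ s, a ≠ b → f a b + f b a = 0) :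
    ∑ a ∈ s, ∑ b ∈ s.erase a, f a b = 0 := by
  rw [Finset.sum_sigma']
  refine Finset.sum_involution (fun p _ => ⟨p.2, p.1⟩) ?_ ?_ ?_ (fun _ _ => rfl)
  · rintro ⟨a, b⟩ hp
    simp only [Finset.mem_sigma, Finset.mem_erase] at hp
    exact hf a hp.1 b hp.2.2 hp.2.1.symm
  · rintro ⟨a, b⟩ hp - h
    simp only [Finset.mem_sigma, Finset.mem_erase] at hp
    exact hp.2.1 (congrArg Sigma.fst h)
  · rintro ⟨a, b⟩ hp
    simp only [Finset.mem_sigma, Finset.mem_erase] at hp ⊢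
    exact ⟨hp.2.2, hp.2.1.symm, hp.1⟩

section Boundary

variable {V : Type} [LinearOrder V] {G : Type} [AddCommGroup G]

def faceSign (s : Finset V) (v : V) : ℤ :=
  (-1) ^ (s.filter fun w => w < v).card

theorem faceSign_erase_of_lt {s : Finset V} {u v : V} (h : u < v) :
    faceSign (s.erase v) u = faceSign s u := by
  rw [faceSign, Finset.filter_erase, Finset.erase_eq_of_notMem (by simp [h.le]), faceSign]

theorem faceSign_erase_of_mem_of_lt {s : Finset V} {u v : V} (hu : u ∈ s) (h : u < v) :
    faceSign (s.erase u) v = -faceSign s v := by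
  have hmem : u ∈ s.filter fun w => w < v := Finset.mem_filter.mpr ⟨hu, h⟩
  rw [faceSign, Finset.filter_erase, Finset.card_erase_of_mem hmem, faceSign,
    ← Nat.succ_pred_eq_of_pos (Finset.card_pos.mpr ⟨u, hmem⟩), pow_succ]
  simp

theorem faceSign_mul_add_faceSign_mul {s : Finset V} {u v : V} (hu : u ∈ s) (hv : v ∈ s)
    (huv : u ≠ v) :
    faceSign (s.erase v) u * faceSign s v + faceSign (s.erase u) v * faceSign s u = 0 := by
  rcases huv.lt_or_gt with h | h
  · rw [faceSign_erase_of_lt h, faceSign_erase_of_mem_of_lt hu h]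
    ring
  · rw [faceSign_erase_of_lt h, faceSign_erase_of_mem_of_lt hv h]
    ring

theorem bdry_single (n : ℕ) (σ : Simp V (n + 1)) (g : G) :
    bdry V G n (Finsupp.single σ g) = bdryFun V G n σ g :=
  Finsupp.liftAddHom_apply_single _ _ _

theorem mapDomain_val_bdryFun (n : ℕ) (σ : Simp V (n + 1)) (g : G) :
    Finsupp.mapDomain Subtype.val (bdryFun V G n σ g) =
      ∑ v ∈ σ.1, Finsupp.single (σ.1.erase v) (faceSign σ.1 v • g) := by
  rw [bdryFun, Finsupp.mapDomain_finsetSum]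
  simp only [Finsupp.mapDomain_single]
  exact Finset.sum_attach σ.1 fun v => Finsupp.single (σ.1.erase v) (faceSign σ.1 v • g)

theorem bdry_bdryFun (n : ℕ) (σ : Simp V (n + 2)) (g : G) :
    bdry V G n (bdryFun V G (n + 1) σ g) = 0 := by
  apply Finsupp.mapDomain_injective Subtype.val_injective
  rw [Finsupp.mapDomain_zero]
  calc Finsupp.mapDomain Subtype.val (bdry V G n (bdryFun V G (n + 1) σ g))
      = ∑ v ∈ σ.1, ∑ u ∈ σ.1.erase v, Finsupp.single ((σ.1.erase v).erase u)
          ((faceSign (σ.1.erase v) u * faceSign σ.1 v) • g) := by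
        rw [bdryFun, map_sum, Finsupp.mapDomain_finsetSum]
        simp only [bdry_single, mapDomain_val_bdryFun, mul_smul]
        exact Finset.sum_attach σ.1 fun v => ∑ u ∈ σ.1.erase v,
          Finsupp.single ((σ.1.erase v).erase u) (faceSign (σ.1.erase v) u • faceSign σ.1 v • g)
    _ = 0 := by
        refine Finset.sum_sum_erase_eq_zero_of_antisymm _ _ fun v hv u hu hvu => ?_
        rw [Finset.erase_right_comm, ← Finsupp.single_add, ← add_smul,
          faceSign_mul_add_faceSign_mul hu hv hvu.symm, zero_smul, Finsupp.single_zero]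

theorem bdry_bdry (n : ℕ) (x : Ch V G (n + 2)) : bdry V G n (bdry V G (n + 1) x) = 0 := by
  induction x using Finsupp.induction with
  | zero => simp
  | single_add σ g f _ _ ih => rw [map_add, map_add, ih, add_zero, bdry_single, bdry_bdryFun]

end Boundary

section ChainComplex

variable {C : ℕ → Type} [∀ n, AddCommGroup (C n)] (d : ∀ n, C (n + 1) →+ C n)

def IsSubcomplex (K : ∀ n, AddSubgroup (C n)) : Prop :=
  ∀ n, ∀ x ∈ K (n + 1), d n x ∈ K n

theorem InfC_isSubcomplex (hdd : ∀ n x, d n (d (n + 1) x) = 0) (D : ∀ n, AddSubgroup (C n)) :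
    IsSubcomplex d (InfC d D) := by
  rintro (_ | n) x ⟨-, hx⟩
  · exact hx
  · exact ⟨hx, by simp [hdd n x]⟩

variable {d} {K L : ∀ n, AddSubgroup (C n)}

theorem mem_relZ_succ {n : ℕ} {x : C (n + 1)} :
    x ∈ relZ d K L (n + 1) ↔ x ∈ K (n + 1) ∧ d n x ∈ L n :=
  Iff.rfl

theorem relZ_le : ∀ n, relZ d K L n ≤ K n
  | 0 => le_rfl
  | _ + 1 => inf_le_left

theorem map_mem_relZ_bot (hdd : ∀ n x, d n (d (n + 1) x) = 0) {n : ℕ} {x : C (n + 1)}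
    (hx : d n x ∈ K n) : d n x ∈ relZ d K (fun _ => ⊥) n := by
  cases n with
  | zero => exact hx
  | succ n => exact ⟨hx, by simp [hdd n x]⟩

theorem mem_relZ_bot_of_mem_relZ_bot {n : ℕ} {x : C n} (hxL : x ∈ L n)
    (hxK : x ∈ relZ d K (fun _ => ⊥) n) : x ∈ relZ d L (fun _ => ⊥) n := by
  cases n with
  | zero => exact hxL
  | succ n => exact ⟨hxL, hxK.2⟩

theorem relH_mk_eq_zero_iff {n : ℕ} (z : relZ d K L n) :
    (z : relH d K L n) = 0 ↔ ∃ w ∈ K (n + 1), ∃ l ∈ L n, d n w + l = z := by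
  rw [QuotientAddGroup.eq_zero_iff, AddSubgroup.mem_addSubgroupOf, relB,
    AddSubgroup.mem_inf, AddSubgroup.mem_sup]
  simp [z.2]

theorem relH_mk_eq_mk_iff {n : ℕ} (z z' : relZ d K L n) :
    (z : relH d K L n) = z' ↔ ∃ w ∈ K (n + 1), ∃ l ∈ L n, d n w + l = z - z' := by
  rw [← sub_eq_zero, ← QuotientAddGroup.mk_sub, relH_mk_eq_zero_iff, AddSubgroup.coe_sub]

theorem relH_bot_mk_eq_zero_iff {n : ℕ} (z : relZ d K (fun _ => ⊥) n) :
    (z : relH d K (fun _ => ⊥) n) = 0 ↔ ∃ w ∈ K (n + 1), d n w = z := by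
  rw [relH_mk_eq_zero_iff]
  simp

theorem relH_bot_mk_eq_mk_iff {n : ℕ} (z z' : relZ d K (fun _ => ⊥) n) :
    (z : relH d K (fun _ => ⊥) n) = z' ↔ ∃ w ∈ K (n + 1), d n w = z - z' := by
  rw [relH_mk_eq_mk_iff]
  simp

theorem inducedRelMap_mk {K' L' : ∀ n, AddSubgroup (C n)} (hK : ∀ n, K n ≤ K' n)
    (hL : ∀ n, L n ≤ L' n) {n : ℕ} (z : relZ d K L n) :
    inducedRelMap d hK hL n z =
      (AddSubgroup.inclusion (relZ_mono d hK hL n) z : relH d K' L' n) :=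
  rfl

noncomputable def connZ (hdd : ∀ n x, d n (d (n + 1) x) = 0) (n : ℕ) :
    relZ d K L (n + 1) →+ relZ d L (fun _ => ⊥) n where
  toFun z := ⟨d n z, map_mem_relZ_bot hdd (mem_relZ_succ.mp z.2).2⟩
  map_zero' := by ext; simp
  map_add' a b := by ext; simp

theorem coe_connZ (hdd : ∀ n x, d n (d (n + 1) x) = 0) {n : ℕ} (z : relZ d K L (n + 1)) :
    (connZ hdd n z : C n) = d n z :=
  rfl

noncomputable def connH (hdd : ∀ n x, d n (d (n + 1) x) = 0) (n : ℕ) :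
    relH d K L (n + 1) →+ relH d L (fun _ => ⊥) n :=
  QuotientAddGroup.map _ _ (connZ hdd n) fun z hz => by
    rw [← QuotientAddGroup.eq_zero_iff, relH_mk_eq_zero_iff] at hz
    obtain ⟨w, -, l, hl, hz⟩ := hz
    rw [AddSubgroup.mem_comap, ← QuotientAddGroup.eq_zero_iff, relH_bot_mk_eq_zero_iff]
    exact ⟨l, hl, by simp [coe_connZ, ← hz, hdd n w]⟩

theorem connH_mk (hdd : ∀ n x, d n (d (n + 1) x) = 0) {n : ℕ} (z : relZ d K L (n + 1)) :
    connH hdd n (z : relH d K L (n + 1)) = (connZ hdd n z : relH d L (fun _ => ⊥) n) :=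
  rfl

theorem exact_inducedRelMap_incl_quot (hdd : ∀ n x, d n (d (n + 1) x) = 0)
    (hLK : ∀ n, L n ≤ K n) (hK : IsSubcomplex d K) (n : ℕ) :
    Function.Exact
      (inducedRelMap d hLK (fun _ => le_rfl) n :
        relH d L (fun _ => ⊥) n →+ relH d K (fun _ => ⊥) n)
      (inducedRelMap d (fun _ => le_rfl) (fun _ => bot_le) n :
        relH d K (fun _ => ⊥) n →+ relH d K L n) := by
  refine fun y => QuotientAddGroup.induction_on y fun z => ?_
  rw [Set.mem_range, QuotientAddGroup.mk_surjective.exists]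
  simp only [inducedRelMap_mk, relH_mk_eq_zero_iff, relH_bot_mk_eq_mk_iff,
    AddSubgroup.coe_inclusion, Subtype.exists]
  constructor
  · rintro ⟨w, hw, l, hl, hz⟩
    have hl_eq : l = z - d n w := by rw [← hz]; abel
    have hlZ : l ∈ relZ d L (fun _ => ⊥) n := mem_relZ_bot_of_mem_relZ_bot hl
      (hl_eq ▸ sub_mem z.2 (map_mem_relZ_bot hdd (hK n w hw)))
    exact ⟨l, hlZ, -w, neg_mem hw, by rw [map_neg, ← hz]; abel⟩
  · rintro ⟨u, hu, w, hw, hwu⟩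
    exact ⟨-w, neg_mem hw, u, relZ_le n hu, by rw [map_neg, hwu]; abel⟩

theorem exact_inducedRelMap_quot_connH (hdd : ∀ n x, d n (d (n + 1) x) = 0)
    (hLK : ∀ n, L n ≤ K n) (n : ℕ) :
    Function.Exact
      (inducedRelMap d (fun _ => le_rfl) (fun _ => bot_le) (n + 1) :
        relH d K (fun _ => ⊥) (n + 1) →+ relH d K L (n + 1))
      (connH hdd n) := by
  refine fun y => QuotientAddGroup.induction_on y fun z => ?_
  rw [Set.mem_range, QuotientAddGroup.mk_surjective.exists]
  simp only [connH_mk, inducedRelMap_mk, relH_bot_mk_eq_zero_iff, relH_mk_eq_mk_iff,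
    AddSubgroup.coe_inclusion, Subtype.exists, mem_relZ_succ, AddSubgroup.mem_bot]
  constructor
  · rintro ⟨l, hl, hdl⟩
    refine ⟨z - l, ⟨sub_mem (relZ_le _ z.2) (hLK _ hl), ?_⟩, 0, zero_mem _, -l, neg_mem hl, ?_⟩
    · rw [map_sub, hdl, coe_connZ, sub_self]
    · simp
  · rintro ⟨u, ⟨-, hdu⟩, w, -, l, hl, h⟩
    have hz : (z : C (n + 1)) = u - (d (n + 1) w + l) := by rw [h]; abel
    exact ⟨-l, neg_mem hl, by simp [coe_connZ, hz, hdu, hdd n w]⟩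

theorem exact_connH_inducedRelMap_incl (hdd : ∀ n x, d n (d (n + 1) x) = 0)
    (hLK : ∀ n, L n ≤ K n) (n : ℕ) :
    Function.Exact (connH hdd n : relH d K L (n + 1) →+ _)
      (inducedRelMap d hLK (fun _ => le_rfl) n :
        relH d L (fun _ => ⊥) n →+ relH d K (fun _ => ⊥) n) := by
  refine fun y => QuotientAddGroup.induction_on y fun u => ?_
  rw [Set.mem_range, QuotientAddGroup.mk_surjective.exists]
  simp only [connH_mk, inducedRelMap_mk, relH_bot_mk_eq_zero_iff, relH_bot_mk_eq_mk_iff,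
    AddSubgroup.coe_inclusion, Subtype.exists, mem_relZ_succ]
  constructor
  · rintro ⟨w, hw, h⟩
    exact ⟨w, ⟨hw, h ▸ relZ_le n u.2⟩, 0, zero_mem _, by simp [coe_connZ, h]⟩
  · rintro ⟨z, ⟨hz, _⟩, l, hl, h⟩
    refine ⟨z - l, sub_mem hz (hLK _ hl), ?_⟩
    rw [coe_connZ] at h
    rw [map_sub, h]
    abel

theorem surjective_inducedRelMap_quot_zero :
    Function.Surjective
      (inducedRelMap d (fun _ => le_rfl) (fun _ => bot_le) 0 :
        relH d K (fun _ => ⊥) 0 →+ relH d K L 0) :=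
  fun y => QuotientAddGroup.induction_on y fun z => ⟨QuotientAddGroup.mk ⟨z, z.2⟩, rfl⟩

end ChainComplex

theorem relative_embedded_homology_les_general
    (V : Type) [LinearOrder V] (G : Type) [AddCommGroup G]
    (H A : Set (Finset V)) (hA : A ⊆ H) :
    ∃ conn : ∀ n,
        relH (bdry V G) (InfC (bdry V G) fun m => chainsOn V G H m)
            (InfC (bdry V G) fun m => chainsOn V G A m) (n + 1) →+
          relH (bdry V G) (InfC (bdry V G) fun m => chainsOn V G A m) (fun _ => ⊥) n,
      (∀ n, Function.Exact (embIncl V G hA n) (embQuot V G H A n)) ∧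
      (∀ n, Function.Exact (embQuot V G H A (n + 1)) (conn n)) ∧
      (∀ n, Function.Exact (conn n) (embIncl V G hA n)) ∧
      Function.Surjective (embQuot V G H A 0) := by
  have hdd : ∀ n (x : Ch V G (n + 2)), bdry V G n (bdry V G (n + 1) x) = 0 := bdry_bdry
  have hAH := InfC_mono (bdry V G) fun m => chainsOn_mono V G hA m
  exact ⟨connH hdd,
    exact_inducedRelMap_incl_quot hdd hAH (InfC_isSubcomplex (bdry V G) hdd _),
    exact_inducedRelMap_quot_connH hdd hAH,
    exact_connH_inducedRelMap_incl hdd hAH,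
    surjective_inducedRelMap_quot_zero⟩

/-- For any hypergraph pair `(H, A)` there is a long exact sequence of
relative embedded homology
`⋯ → H_n(A) → H_n(H) → H_n(H, A) → H_{n-1}(A) → ⋯`,
where the first two maps are induced by the inclusions and the last is a connecting
homomorphism (in degree 0 the sequence ends with a surjection `H_0(H) → H_0(H,A) → 0`). -/
theorem relative_embedded_homology_les
    (V : Type) [LinearOrder V] [Fintype V] (G : Type) [AddCommGroup G]
    (H A : Set (Finset V)) (hH : ∀ σ ∈ H, σ.Nonempty) (hA : A ⊆ H) :
    ∃ conn : ∀ n,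
        relH (bdry V G) (InfC (bdry V G) fun m => chainsOn V G H m)
            (InfC (bdry V G) fun m => chainsOn V G A m) (n + 1) →+
          relH (bdry V G) (InfC (bdry V G) fun m => chainsOn V G A m) (fun _ => ⊥) n,
      (∀ n, Function.Exact (embIncl V G hA n) (embQuot V G H A n)) ∧
      (∀ n, Function.Exact (embQuot V G H A (n + 1)) (conn n)) ∧
      (∀ n, Function.Exact (conn n) (embIncl V G hA n)) ∧
      Function.Surjective (embQuot V G H A 0) :=
  relative_embedded_homology_les_general V G H A hA
end

section
/- For any hypergraph pair (H, A), the interior int(H,A) is open in H; that is, bd(H, int(H,A)) = ∅. -/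
variable {V : Type}

/-- The associated simplicial complex `ΔK` of a hypergraph `K`: all nonempty subsets of
hyperedges of `K`. -/
def assocSC (K : Set (Finset V)) : Set (Finset V) :=
  {σ | σ.Nonempty ∧ ∃ τ ∈ K, σ ⊆ τ}

/-- The closed complement `H − A = {σ ∈ H : σ ⊆ τ for some τ ∈ H \ A}`. -/
def closedCompl (H A : Set (Finset V)) : Set (Finset V) :=
  {σ ∈ H | ∃ τ ∈ H, τ ∉ A ∧ σ ⊆ τ}

/-- The boundary `bd(H, A) = A ∩ (H − A)`. -/
def bdH (H A : Set (Finset V)) : Set (Finset V) := A ∩ closedCompl H A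

/-- The interior `int(H, A) = A \ bd(H, A)`. -/
def intH (H A : Set (Finset V)) : Set (Finset V) := A \ bdH H A

/-- The closure `cl(H, A) = H \ int(H, H \ A)`. -/
def clH (H A : Set (Finset V)) : Set (Finset V) := H \ intH H (H \ A)

/-- A sub-hypergraph `B` is open in `H` if its boundary in `H` is empty. -/
def IsOpenH (H B : Set (Finset V)) : Prop := bdH H B = ∅

/-- A sub-hypergraph `B` is closed in `H` if `H \ B` is open in `H`. -/
def IsClosedH (H B : Set (Finset V)) : Prop := IsOpenH H (H \ B)

/-- `K` is an (abstract) simplicial complex: it is closed under taking nonempty subsets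
of its hyperedges. -/
def IsSC (K : Set (Finset V)) : Prop :=
  ∀ σ ∈ K, ∀ τ : Finset V, τ ⊆ σ → τ.Nonempty → τ ∈ K

/-- For any hypergraph pair `(H, A)`, the interior `int(H, A)` is open
in `H`, i.e. `bd(H, int(H,A)) = ∅`. -/
theorem int_isOpen
    {V : Type} (H A : Set (Finset V)) (hA : A ⊆ H) :
    IsOpenH H (intH H A) := by
  ext σ
  simp only [Set.mem_empty_iff_false, iff_false]
  rintro ⟨⟨hσA, hσnb⟩, hσH, τ, hτH, hτni, hστ⟩
  apply hσnb
  rcases Classical.em (τ ∈ A) with hτA | hτA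
  · have hbd : τ ∈ bdH H A := by
      by_contra h
      exact hτni ⟨hτA, h⟩
    obtain ⟨-, -, ρ, hρH, hρA, hτρ⟩ := hbd
    exact ⟨hσA, hσH, ρ, hρH, hρA, hστ.trans hτρ⟩
  · exact ⟨hσA, hσH, τ, hτH, hτA, hστ⟩
end

section
/- For any hypergraph H and any family {A_i}_{i ∈ I} of open sub-hypergraphs of H, both the intersection ∩_{i∈I} A_i and the union ∪_{i∈I} A_i are open in H; consequently the open sub-hypergraphs of H form a topology on H. -/
variable {V : Type}

/-- Openness in the form used for the sub-hypergraph topology: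
`B` is open in `H` iff `B ∩ Δ(H \ B) = ∅`. -/
def IsOpenD (H B : Set (Finset V)) : Prop := B ∩ assocSC (H \ B) = ∅

/-! A sub-hypergraph `B` of `H` is open exactly when it is closed upwards inside `H`: every
hyperedge of `H` containing a nonempty member of `B` lies in `B`. Upward closure is preserved
by arbitrary intersections and unions, and is trivial for `∅` and `H`. -/

theorem isOpenD_iff {H B : Set (Finset V)} :
    IsOpenD H B ↔ ∀ σ ∈ B, σ.Nonempty → ∀ τ ∈ H, σ ⊆ τ → τ ∈ B := by
  simp only [IsOpenD, assocSC, Set.eq_empty_iff_forall_notMem, Set.mem_inter_iff,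
    Set.mem_ofPred_eq, Set.mem_sdiff]
  constructor
  · intro h σ hσB hσ τ hτH hστ
    by_contra hτB
    exact h σ ⟨hσB, hσ, τ, ⟨hτH, hτB⟩, hστ⟩
  · rintro h σ ⟨hσB, hσ, τ, ⟨hτH, hτB⟩, hστ⟩
    exact hτB (h σ hσB hσ τ hτH hστ)

theorem isOpenD_iInter {H : Set (Finset V)} {I : Type} {A : I → Set (Finset V)}
    (hA : ∀ i, IsOpenD H (A i)) : IsOpenD H (⋂ i, A i) := by
  simp only [isOpenD_iff, Set.mem_iInter] at hA ⊢
  exact fun σ hσA hσ τ hτH hστ i => hA i σ (hσA i) hσ τ hτH hστ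

theorem isOpenD_iUnion {H : Set (Finset V)} {I : Type} {A : I → Set (Finset V)}
    (hA : ∀ i, IsOpenD H (A i)) : IsOpenD H (⋃ i, A i) := by
  simp only [isOpenD_iff, Set.mem_iUnion] at hA ⊢
  rintro σ ⟨i, hσA⟩ hσ τ hτH hστ
  exact ⟨i, hA i σ hσA hσ τ hτH hστ⟩

theorem isOpenD_empty (H : Set (Finset V)) : IsOpenD H ∅ :=
  isOpenD_iff.2 fun σ hσ => absurd hσ (Set.notMem_empty σ)

theorem isOpenD_self (H : Set (Finset V)) : IsOpenD H H :=
  isOpenD_iff.2 fun _ _ _ _ hτH _ => hτH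

theorem open_subhypergraphs_topology_general
    {V : Type} (H : Set (Finset V)) {I : Type} (A : I → Set (Finset V))
    (hopen : ∀ i, IsOpenD H (A i)) :
    IsOpenD H (⋂ i, A i) ∧ IsOpenD H (⋃ i, A i) ∧
      IsOpenD H (∅ : Set (Finset V)) ∧ IsOpenD H H :=
  ⟨isOpenD_iInter hopen, isOpenD_iUnion hopen, isOpenD_empty H, isOpenD_self H⟩

/-- For any hypergraph `H` and any family `{A_i}` of open
sub-hypergraphs of `H`, both `⋂ i, A i` and `⋃ i, A i` are open in `H`; together with
the openness of `∅` and `H` this shows that the open sub-hypergraphs of `H` form a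
topology on `H`. -/
theorem open_subhypergraphs_topology
    {V : Type} (H : Set (Finset V)) {I : Type} (A : I → Set (Finset V))
    (hA : ∀ i, A i ⊆ H) (hopen : ∀ i, IsOpenD H (A i)) :
    IsOpenD H (⋂ i, A i) ∧ IsOpenD H (⋃ i, A i) ∧
      IsOpenD H (∅ : Set (Finset V)) ∧ IsOpenD H H :=
  open_subhypergraphs_topology_general H A hopen
end
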